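/- For all (r, θ) with r² + a²cos²θ > 0, the gradient invariant I₇ of the Kerr–(anti-)de Sitter black hole satisfies the closed-form identity I₇(r, θ) = −(27648 m⁴ r cosθ a/(r² + a²c²)¹⁵)·(7a⁶c⁶ − 35a⁴c⁴r² + 21a²c²r⁴ − r⁶)·(a⁶c⁶ − 21a⁴c⁴r² + 35a²c²r⁴ − 7r⁶)·E(r, θ), where c = cosθ; in particular I₇ vanishes on the boundary of the ergosphere region E(r, θ) = 0. -/

import Mathlib

/-!
`I₁ + i I₂ = 48 m² ζ⁻⁶` is holomorphic in `ζ = r + i a cos θ`, with `∂_r ζ = 1` and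
`∂_θ ζ = -i a sin θ`. Writing `w` for its complex derivative at `ζ`, the Cauchy–Riemann equations
give `∂_r I₁ ∂_r I₂ = Re w Im w` and `∂_θ I₁ ∂_θ I₂ = -a² sin²θ Re w Im w`, so
`I₇ = (Δ_r - a² sin²θ Δ_θ) / ρ² · Re w Im w = E / (3ρ²) · Re w Im w`. Finally
`w = -288 m² ζ̄⁷ / ρ¹⁴`, and the real and imaginary parts of `ζ̄⁷` are the two degree-seven
factors of the closed form.
-/

noncomputable section

namespace KerrAdS

/-- `ρ² = r² + a² cos²θ` in Boyer–Lindquist coordinates. -/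
def rho2 (a r θ : ℝ) : ℝ := r ^ 2 + a ^ 2 * Real.cos θ ^ 2

/-- The complex combination `I₁ + i I₂ = 48 m² (r − i a cos θ)⁶ / ρ¹²`
(the orientation convention `I₁ + iI₂ = 48 Ψ₂²` with `Ψ₂ = −m/(r + i a cos θ)³`). -/
def Ic (a m r θ : ℝ) : ℂ :=
  48 * (m : ℂ) ^ 2 * ((r : ℂ) - Complex.I * ((a * Real.cos θ : ℝ) : ℂ)) ^ 6 /
    ((rho2 a r θ : ℝ) : ℂ) ^ 6

/-- The Weyl invariant `I₁ = C_{αβγδ} C^{αβγδ}` of the Kerr–(anti-)de Sitter black hole. -/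
def I1 (a m r θ : ℝ) : ℝ := (Ic a m r θ).re

/-- The Chern–Pontryagin invariant `I₂ = C*_{αβγδ} C^{αβγδ}`. -/
def I2 (a m r θ : ℝ) : ℝ := (Ic a m r θ).im

/-- `Δ_r = (1 − Λr²/3)(r² + a²) − 2mr`. -/
def Δr (a m Λ r : ℝ) : ℝ := (1 - Λ * r ^ 2 / 3) * (r ^ 2 + a ^ 2) - 2 * m * r

/-- `Δ_θ = 1 + (a²Λ/3) cos²θ`. -/
def Δθ (a Λ θ : ℝ) : ℝ := 1 + a ^ 2 * Λ / 3 * Real.cos θ ^ 2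

/-- The gradient invariant `I₅ = ∇_μ I₁ ∇^μ I₁
  = (Δ_r/ρ²)(∂_r I₁)² + (Δ_θ/ρ²)(∂_θ I₁)²`. -/
def I5 (a m Λ r θ : ℝ) : ℝ :=
  Δr a m Λ r / rho2 a r θ * (deriv (fun r' => I1 a m r' θ) r) ^ 2 +
    Δθ a Λ θ / rho2 a r θ * (deriv (fun θ' => I1 a m r θ') θ) ^ 2

/-- The gradient invariant `I₆ = ∇_μ I₂ ∇^μ I₂
  = (Δ_r/ρ²)(∂_r I₂)² + (Δ_θ/ρ²)(∂_θ I₂)²`. -/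
def I6 (a m Λ r θ : ℝ) : ℝ :=
  Δr a m Λ r / rho2 a r θ * (deriv (fun r' => I2 a m r' θ) r) ^ 2 +
    Δθ a Λ θ / rho2 a r θ * (deriv (fun θ' => I2 a m r θ') θ) ^ 2

/-- The gradient invariant `I₇ = ∇_μ I₁ ∇^μ I₂
  = (Δ_r/ρ²)(∂_r I₁)(∂_r I₂) + (Δ_θ/ρ²)(∂_θ I₁)(∂_θ I₂)`. -/
def I7 (a m Λ r θ : ℝ) : ℝ :=
  Δr a m Λ r / rho2 a r θ *
      (deriv (fun r' => I1 a m r' θ) r) * (deriv (fun r' => I2 a m r' θ) r) +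
    Δθ a Λ θ / rho2 a r θ *
      (deriv (fun θ' => I1 a m r θ') θ) * (deriv (fun θ' => I2 a m r θ') θ)

/-- The ergosurface polynomial
`E = Λa⁴c⁴ − Λa⁴c² − Λa²r² − Λr⁴ + 3a²c² − 6mr + 3r²`, `c = cos θ`. -/
def E (a m Λ r θ : ℝ) : ℝ :=
  Λ * a ^ 4 * Real.cos θ ^ 4 - Λ * a ^ 4 * Real.cos θ ^ 2 - Λ * a ^ 2 * r ^ 2 - Λ * r ^ 4 +
    3 * a ^ 2 * Real.cos θ ^ 2 - 6 * m * r + 3 * r ^ 2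

/-- The differential Weyl invariant `I₃ = ∇_μ C_{αβγδ} ∇^μ C^{αβγδ}`
(explicit closed form). -/
def I3 (a m Λ r θ : ℝ) : ℝ :=
  240 * m ^ 2 / rho2 a r θ ^ 9 *
    (a ^ 4 * Real.cos θ ^ 4 - 4 * a ^ 3 * Real.cos θ ^ 3 * r
      - 6 * a ^ 2 * Real.cos θ ^ 2 * r ^ 2 + 4 * a * Real.cos θ * r ^ 3 + r ^ 4) *
    (a ^ 4 * Real.cos θ ^ 4 + 4 * a ^ 3 * Real.cos θ ^ 3 * r
      - 6 * a ^ 2 * Real.cos θ ^ 2 * r ^ 2 - 4 * a * Real.cos θ * r ^ 3 + r ^ 4) *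
    E a m Λ r θ

/-- The mixed differential Weyl invariant `I₄ = ∇_μ C_{αβγδ} ∇^μ C*^{αβγδ}`
(explicit closed form). -/
def I4 (a m Λ r θ : ℝ) : ℝ :=
  1920 * a * Real.cos θ * r * m ^ 2 / rho2 a r θ ^ 9 * E a m Λ r θ *
    (a ^ 2 * Real.cos θ ^ 2 - 2 * a * Real.cos θ * r - r ^ 2) *
    (a ^ 2 * Real.cos θ ^ 2 + 2 * a * Real.cos θ * r - r ^ 2) *
    (a ^ 2 * Real.cos θ ^ 2 - r ^ 2)

end KerrAdS

open Complex ComplexConjugate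

theorem deriv_re_mul_deriv_im {f : ℝ → ℂ} {w : ℂ} {x : ℝ}
    (h : HasDerivAt f w x) :
    deriv (fun t => (f t).re) x * deriv (fun t => (f t).im) x = w.re * w.im := by
  have hre : HasDerivAt (fun t => (f t).re) w.re x := reCLM.hasFDerivAt.comp_hasDerivAt x h
  have him : HasDerivAt (fun t => (f t).im) w.im x := imCLM.hasFDerivAt.comp_hasDerivAt x h
  rw [hre.deriv, him.deriv]

theorem Complex.inv_pow_eq_conj_pow_div (z : ℂ) (n : ℕ) :
    (z ^ n)⁻¹ = conj z ^ n / (normSq z : ℂ) ^ n := by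
  rw [← inv_pow, inv_def, mul_pow, div_eq_mul_inv, ofReal_inv, inv_pow]

theorem HasDerivAt.inv_pow {𝕜 𝕜' : Type*} [NontriviallyNormedField 𝕜]
    [NontriviallyNormedField 𝕜'] [NormedAlgebra 𝕜 𝕜'] {f : 𝕜 → 𝕜'} {f' : 𝕜'} {x : 𝕜} (n : ℕ)
    (hf : HasDerivAt f f' x) (hx : f x ≠ 0) :
    HasDerivAt (fun t => (f t ^ n)⁻¹) (-n * (f x ^ (n + 1))⁻¹ * f') x := by
  have h : HasDerivAt (fun t => f t ^ (-n : ℤ))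
      (((-n : ℤ) : 𝕜') * f x ^ ((-n : ℤ) - 1) * f') x :=
    (hasDerivAt_zpow (-n : ℤ) (f x) (Or.inl hx)).comp x hf
  rw [show (-n : ℤ) - 1 = -((n + 1 : ℕ) : ℤ) by push_cast; ring] at h
  simpa only [zpow_neg, zpow_natCast, Int.cast_neg, Int.cast_natCast] using h

theorem Complex.re_sub_I_mul_pow_seven (x y : ℝ) :
    (((x : ℂ) - I * y) ^ 7).re =
      x * (x ^ 6 - 21 * x ^ 4 * y ^ 2 + 35 * x ^ 2 * y ^ 4 - 7 * y ^ 6) := by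
  simp only [pow_succ, pow_zero, one_mul, mul_re, mul_im, sub_re, sub_im, ofReal_re, ofReal_im,
    I_re, I_im]
  ring

theorem Complex.im_sub_I_mul_pow_seven (x y : ℝ) :
    (((x : ℂ) - I * y) ^ 7).im =
      y * (y ^ 6 - 21 * y ^ 4 * x ^ 2 + 35 * y ^ 2 * x ^ 4 - 7 * x ^ 6) := by
  simp only [pow_succ, pow_zero, one_mul, mul_re, mul_im, sub_re, sub_im, ofReal_re, ofReal_im,
    I_re, I_im]
  ring

namespace KerrAdS

-- `Ψ₂ = -m / ζ³`, so `I₁ + i I₂ = 48 Ψ₂²` is the holomorphic function `48 m² ζ⁻⁶` of `ζ`.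
def ζ (a r θ : ℝ) : ℂ := r + (a * Real.cos θ : ℝ) * I

-- The complex derivative of `w ↦ 48 m² w⁻⁶` at `ζ`.
def dIc (a m r θ : ℝ) : ℂ := -288 * m ^ 2 * (ζ a r θ ^ 7)⁻¹

theorem normSq_ζ (a r θ : ℝ) : normSq (ζ a r θ) = rho2 a r θ := by
  rw [ζ, normSq_add_mul_I, rho2, mul_pow]

theorem conj_ζ (a r θ : ℝ) : conj (ζ a r θ) = r - I * (a * Real.cos θ : ℝ) := by
  rw [ζ, map_add, map_mul, conj_ofReal, conj_ofReal, conj_I]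
  ring

theorem ζ_ne_zero {a r θ : ℝ} (h : 0 < rho2 a r θ) : ζ a r θ ≠ 0 :=
  normSq_pos.mp (normSq_ζ a r θ ▸ h)

theorem Ic_eq_inv_pow (a m r θ : ℝ) : Ic a m r θ = 48 * m ^ 2 * (ζ a r θ ^ 6)⁻¹ := by
  rw [Complex.inv_pow_eq_conj_pow_div, normSq_ζ, conj_ζ, Ic]
  ring

theorem hasDerivAt_ζ_r (a r θ : ℝ) : HasDerivAt (fun r' => ζ a r' θ) 1 r := by
  rw [← ofReal_one]
  exact (hasDerivAt_id r).ofReal_comp.add_const _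

theorem hasDerivAt_ζ_θ (a r θ : ℝ) :
    HasDerivAt (fun θ' => ζ a r θ') ((-(a * Real.sin θ) : ℝ) * I) θ := by
  rw [← mul_neg]
  exact (((Real.hasDerivAt_cos θ).const_mul a).ofReal_comp.mul_const I).const_add (r : ℂ)

theorem hasDerivAt_Ic_r {a m r θ : ℝ} (h : 0 < rho2 a r θ) :
    HasDerivAt (fun r' => Ic a m r' θ) (dIc a m r θ) r := by
  simp_rw [Ic_eq_inv_pow]
  refine (((hasDerivAt_ζ_r a r θ).inv_pow 6 (ζ_ne_zero h)).const_mul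
    (48 * (m : ℂ) ^ 2)).congr_deriv ?_
  rw [dIc]
  push_cast
  ring

theorem hasDerivAt_Ic_θ {a m r θ : ℝ} (h : 0 < rho2 a r θ) :
    HasDerivAt (fun θ' => Ic a m r θ') (dIc a m r θ * ((-(a * Real.sin θ) : ℝ) * I)) θ := by
  simp_rw [Ic_eq_inv_pow]
  refine (((hasDerivAt_ζ_θ a r θ).inv_pow 6 (ζ_ne_zero h)).const_mul
    (48 * (m : ℂ) ^ 2)).congr_deriv ?_
  rw [dIc]
  push_cast
  ring

theorem E_eq_three_mul_sub (a m Λ r θ : ℝ) :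
    E a m Λ r θ = 3 * (Δr a m Λ r - (a * Real.sin θ) ^ 2 * Δθ a Λ θ) := by
  rw [E, Δr, Δθ, mul_pow, Real.sin_sq]
  ring

theorem I7_eq_E_mul {a m Λ r θ : ℝ} (h : 0 < rho2 a r θ) :
    I7 a m Λ r θ =
      E a m Λ r θ / (3 * rho2 a r θ) * ((dIc a m r θ).re * (dIc a m r θ).im) := by
  have hr := deriv_re_mul_deriv_im (hasDerivAt_Ic_r (m := m) h)
  have hθ := deriv_re_mul_deriv_im (hasDerivAt_Ic_θ (m := m) h)
  simp only [I7, I1, I2]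
  rw [mul_assoc, hr, mul_assoc (Δθ a Λ θ / rho2 a r θ), hθ, E_eq_three_mul_sub]
  simp only [mul_re, mul_im, ofReal_re, ofReal_im, I_re, I_im]
  field_simp
  ring

theorem dIc_eq (a m r θ : ℝ) :
    dIc a m r θ =
      ((-288 * m ^ 2 / rho2 a r θ ^ 7 : ℝ) : ℂ) * (r - I * (a * Real.cos θ : ℝ)) ^ 7 := by
  rw [dIc, Complex.inv_pow_eq_conj_pow_div, normSq_ζ, conj_ζ]
  push_cast
  ring

/-- For all `(r, θ)` with `ρ² > 0`, the gradient invariant `I₇` of the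
Kerr–(anti-)de Sitter black hole has the stated closed form; in particular `I₇` vanishes
on the boundary of the ergosphere region `E = 0`. -/
theorem I7_closed_form (a m Λ : ℝ) :
    ∀ r θ : ℝ, 0 < rho2 a r θ →
      I7 a m Λ r θ =
        -(27648 * m ^ 4 * r * Real.cos θ * a / rho2 a r θ ^ 15) *
          (7 * a ^ 6 * Real.cos θ ^ 6 - 35 * a ^ 4 * Real.cos θ ^ 4 * r ^ 2
            + 21 * a ^ 2 * Real.cos θ ^ 2 * r ^ 4 - r ^ 6) *
          (a ^ 6 * Real.cos θ ^ 6 - 21 * a ^ 4 * Real.cos θ ^ 4 * r ^ 2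
            + 35 * a ^ 2 * Real.cos θ ^ 2 * r ^ 4 - 7 * r ^ 6) *
          E a m Λ r θ ∧
      (E a m Λ r θ = 0 → I7 a m Λ r θ = 0) := by
  intro r θ h
  refine (fun hI7 => ⟨hI7, fun hE => by rw [hI7, hE, mul_zero]⟩) ?_
  rw [I7_eq_E_mul h, dIc_eq, re_ofReal_mul, im_ofReal_mul, re_sub_I_mul_pow_seven,
    im_sub_I_mul_pow_seven]
  field_simp
  ring

end KerrAdS
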